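/- Let Γ be a vertex-transitive reflexive locally-finite relation on V and v ∈ V. Then μ(v) ≥ |Γ(v)| − |Ω(v)| + |Ω⁻(v)| − 1, where Ω(v) = Γ(v) ∩ K_v is the kernel graph. -/

import Mathlib

open Set Pointwise

variable {V : Type*}

/-- Image of a set under the relation. -/
def img (Γ : V → Set V) (F : Set V) : Set V := ⋃ x ∈ F, Γ x
/-- Reverse relation. -/
def rev (Γ : V → Set V) : V → Set V := fun y => {x | y ∈ Γ x}
/-- Boundary ∂(F) = Γ(F) \ F. -/
def bd (Γ : V → Set V) (F : Set V) : Set V := img Γ F \ F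
/-- ∇(F) = V \ (F ∪ Γ(F)). -/
def nab (Γ : V → Set V) (F : Set V) : Set V := (F ∪ img Γ F)ᶜ
/-- Reflexive relation. -/
def Refl (Γ : V → Set V) : Prop := ∀ x, x ∈ Γ x
/-- Locally finite relation. -/
def LocFin (Γ : V → Set V) : Prop := ∀ x, (Γ x).Finite
/-- Automorphism of the relation. -/
def IsAuto (Γ : V → Set V) (φ : V ≃ V) : Prop := ∀ x, Γ (φ x) = φ '' Γ x
/-- Vertex-transitivity. -/
def VT (Γ : V → Set V) : Prop := ∀ x y : V, ∃ φ : V ≃ V, IsAuto Γ φ ∧ φ x = y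
/-- A finite v-Moser set. -/
def MoserSet (Γ : V → Set V) (v : V) (F : Set V) : Prop :=
  F.Finite ∧ v ∈ F ∧ rev Γ v ∩ F = {v}
/-- μ(v): minimum boundary size over v-Moser sets. -/
noncomputable def mu (Γ : V → Set V) (v : V) : ℕ :=
  sInf {n | ∃ F, MoserSet Γ v F ∧ (bd Γ F).ncard = n}
/-- A v-molecule: Moser set of minimum boundary. -/
def Molecule (Γ : V → Set V) (v : V) (F : Set V) : Prop :=
  MoserSet Γ v F ∧ (bd Γ F).ncard = mu Γ v
/-- The v-kernel: the unique minimal v-molecule. -/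
def IsKernel (Γ : V → Set V) (v : V) (K : Set V) : Prop :=
  Molecule Γ v K ∧ ∀ F, Molecule Γ v F → K ⊆ F
/-- Weak connectivity κ₀. -/
noncomputable def kappa0 (Γ : V → Set V) : ℕ :=
  sInf {n | ∃ X : Set V, X.Finite ∧ X.Nonempty ∧ (bd Γ X).ncard = n}
/-- Weak fragment. -/
def WeakFragment (Γ : V → Set V) (X : Set V) : Prop :=
  X.Finite ∧ X.Nonempty ∧ (bd Γ X).ncard = kappa0 Γ
/-- Weak atom: a weak fragment of minimum cardinality. -/
def WeakAtom (Γ : V → Set V) (X : Set V) : Prop :=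
  WeakFragment Γ X ∧ ∀ Y, WeakFragment Γ Y → X.ncard ≤ Y.ncard

/-!
Put `A = Γ(v) \ K_v` and `B = Ω⁻(v) \ {v}`; both lie in `∂(K_v)` and they are disjoint, so
`|A| + |B| ≤ |∂(K_v)| = μ(v)`. For `A` this is immediate. For `x ∈ B` we have `v ∈ K_x`, and
`x ∉ K_v` because `v ∈ Γ(x)` while `Γ⁻(v) ∩ K_v = {v}`. If `x` were outside `Γ(K_v)`, then
`K_v ∩ K_x` would be a `v`-Moser set and `K_v ∪ K_x` an `x`-Moser set; by submodularity of
`|∂|` and `μ(x) = μ(v)` (vertex-transitivity) the intersection would be a `v`-molecule, forcing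
`K_v ⊆ K_x`, hence `K_v = K_x` since kernels are translates of each other, contradicting
`x ∈ K_x \ K_v`.
-/

section Relation

variable {Γ : V → Set V} {F G : Set V} {v x : V}

lemma mem_img_iff : x ∈ img Γ F ↔ ∃ y ∈ F, x ∈ Γ y := by simp [img]

lemma img_union : img Γ (F ∪ G) = img Γ F ∪ img Γ G := biUnion_union F G Γ

lemma img_mono (h : F ⊆ G) : img Γ F ⊆ img Γ G := biUnion_subset_biUnion_left h

lemma img_inter_subset : img Γ (F ∩ G) ⊆ img Γ F ∩ img Γ G :=
  subset_inter (img_mono inter_subset_left) (img_mono inter_subset_right)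

lemma sdiff_subset_bd (hv : v ∈ F) : Γ v \ F ⊆ bd Γ F :=
  sdiff_subset_sdiff_left (subset_biUnion_of_mem (u := Γ) hv)

lemma LocFin.img_finite (hlf : LocFin Γ) (hF : F.Finite) : (img Γ F).Finite :=
  hF.biUnion fun x _ => hlf x

lemma LocFin.bd_finite (hlf : LocFin Γ) (hF : F.Finite) : (bd Γ F).Finite :=
  (hlf.img_finite hF).sdiff

end Relation

lemma ncard_inter_sdiff_add_ncard_union_sdiff_le {α : Type*} {P Q A B : Set α}
    (hP : P.Finite) (hQ : Q.Finite) :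
    ((P ∩ Q) \ (A ∩ B)).ncard + ((P ∪ Q) \ (A ∪ B)).ncard ≤ (P \ A).ncard + (Q \ B).ncard := by
  have hPA : (P \ A).Finite := hP.sdiff
  have hQB : (Q \ B).Finite := hQ.sdiff
  calc ((P ∩ Q) \ (A ∩ B)).ncard + ((P ∪ Q) \ (A ∪ B)).ncard
      = ((P ∩ Q) \ (A ∩ B) ∪ (P ∪ Q) \ (A ∪ B)).ncard
          + ((P ∩ Q) \ (A ∩ B) ∩ ((P ∪ Q) \ (A ∪ B))).ncard :=
        (ncard_union_add_ncard_inter _ _ (hP.inter_of_left Q).sdiff (hP.union hQ).sdiff).symm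
    _ ≤ (P \ A ∪ Q \ B).ncard + (P \ A ∩ (Q \ B)).ncard := by
        apply add_le_add
        · exact ncard_le_ncard (fun y => by simp only [mem_union, mem_inter_iff, mem_sdiff]; tauto)
            (hPA.union hQB)
        · exact ncard_le_ncard (fun y => by simp only [mem_union, mem_inter_iff, mem_sdiff]; tauto)
            (hPA.inter_of_left _)
    _ = (P \ A).ncard + (Q \ B).ncard := ncard_union_add_ncard_inter _ _ hPA hQB

theorem LocFin.ncard_bd_inter_add_ncard_bd_union_le {Γ : V → Set V} {F G : Set V}
    (hlf : LocFin Γ) (hF : F.Finite) (hG : G.Finite) :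
    (bd Γ (F ∩ G)).ncard + (bd Γ (F ∪ G)).ncard ≤ (bd Γ F).ncard + (bd Γ G).ncard := by
  have hFG := (hlf.img_finite hF).inter_of_left (img Γ G)
  calc (bd Γ (F ∩ G)).ncard + (bd Γ (F ∪ G)).ncard
      ≤ ((img Γ F ∩ img Γ G) \ (F ∩ G)).ncard + ((img Γ F ∪ img Γ G) \ (F ∪ G)).ncard := by
        rw [bd, bd, img_union]
        exact Nat.add_le_add_right
          (ncard_le_ncard (sdiff_subset_sdiff_left img_inter_subset) hFG.sdiff) _
    _ ≤ (bd Γ F).ncard + (bd Γ G).ncard :=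
        ncard_inter_sdiff_add_ncard_union_sdiff_le (hlf.img_finite hF) (hlf.img_finite hG)

section Moser

variable {Γ : V → Set V} {F G : Set V} {v x : V}

lemma mu_le_ncard_bd (hF : MoserSet Γ v F) : mu Γ v ≤ (bd Γ F).ncard :=
  Nat.sInf_le ⟨F, hF, rfl⟩

lemma MoserSet.eq_of_mem (hF : MoserSet Γ v F) (hvx : v ∈ Γ x) (hx : x ∈ F) : x = v := by
  have hx' : x ∈ rev Γ v ∩ F := ⟨hvx, hx⟩
  rwa [hF.2.2] at hx'

lemma MoserSet.mem_rel_self (hF : MoserSet Γ v F) : v ∈ Γ v := by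
  have hv : v ∈ rev Γ v ∩ F := hF.2.2 ▸ rfl
  exact hv.1

lemma MoserSet.inter (hF : MoserSet Γ v F) (hv : v ∈ G) : MoserSet Γ v (F ∩ G) :=
  ⟨hF.1.inter_of_left G, ⟨hF.2.1, hv⟩, by rw [← inter_assoc, hF.2.2, singleton_inter_of_mem hv]⟩

lemma MoserSet.union_left (hG : MoserSet Γ x G) (hF : F.Finite) (hx : x ∉ img Γ F) :
    MoserSet Γ x (F ∪ G) := by
  have hrev : rev Γ x ∩ F = ∅ :=
    eq_empty_of_forall_notMem fun y hy => hx (mem_img_iff.2 ⟨y, hy.2, hy.1⟩)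
  exact ⟨hF.union hG.1, Or.inr hG.2.1, by rw [inter_union_distrib_left, hrev, hG.2.2, empty_union]⟩

lemma IsKernel.unique {K₁ K₂ : Set V} (h₁ : IsKernel Γ v K₁) (h₂ : IsKernel Γ v K₂) :
    K₁ = K₂ :=
  (h₁.2 _ h₂.1).antisymm (h₂.2 _ h₁.1)

end Moser

namespace IsAuto

variable {Γ : V → Set V} {φ : V ≃ V} {F : Set V} {v : V}

lemma symm (h : IsAuto Γ φ) : IsAuto Γ φ.symm := fun x => by
  rw [← φ.symm_image_image (Γ (φ.symm x)), ← h, φ.apply_symm_apply]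

lemma img_image (h : IsAuto Γ φ) : img Γ (φ '' F) = φ '' img Γ F := by
  simp only [img, biUnion_image, image_iUnion₂]
  exact iUnion₂_congr fun x _ => h x

lemma ncard_bd_image (h : IsAuto Γ φ) : (bd Γ (φ '' F)).ncard = (bd Γ F).ncard := by
  rw [bd, bd, h.img_image, ← image_sdiff φ.injective, ncard_image_of_injective _ φ.injective]

lemma rev_image (h : IsAuto Γ φ) : rev Γ (φ v) = φ '' rev Γ v := by
  ext x
  simp [rev, mem_image_equiv, h.symm x]

lemma moserSet_image (h : IsAuto Γ φ) (hF : MoserSet Γ v F) : MoserSet Γ (φ v) (φ '' F) :=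
  ⟨hF.1.image φ, mem_image_of_mem φ hF.2.1, by
    rw [h.rev_image, ← image_inter φ.injective, hF.2.2, image_singleton]⟩

lemma mu_apply (h : IsAuto Γ φ) (v : V) : mu Γ (φ v) = mu Γ v := by
  have key : ∀ {ψ : V ≃ V}, IsAuto Γ ψ → ∀ u n, (∃ F, MoserSet Γ u F ∧ (bd Γ F).ncard = n) →
      ∃ F, MoserSet Γ (ψ u) F ∧ (bd Γ F).ncard = n :=
    fun hψ _ _ ⟨F, hF, hn⟩ => ⟨_, hψ.moserSet_image hF, by rw [hψ.ncard_bd_image, hn]⟩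
  unfold mu
  congr 1
  ext n
  refine ⟨fun hn => ?_, key h v n⟩
  simpa using key h.symm (φ v) n hn

lemma molecule_image (h : IsAuto Γ φ) (hF : Molecule Γ v F) : Molecule Γ (φ v) (φ '' F) :=
  ⟨h.moserSet_image hF.1, by rw [h.ncard_bd_image, hF.2, h.mu_apply]⟩

lemma isKernel_image (h : IsAuto Γ φ) (hK : IsKernel Γ v F) : IsKernel Γ (φ v) (φ '' F) := by
  refine ⟨h.molecule_image hK.1, fun G hG => ?_⟩
  have hG' := h.symm.molecule_image hG
  rw [φ.symm_apply_apply] at hG'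
  simpa using image_mono (f := φ) (hK.2 _ hG')

end IsAuto

namespace VT

variable {Γ : V → Set V} {Kv Kx : Set V} {v x : V}

lemma mu_eq (hvt : VT Γ) (x v : V) : mu Γ x = mu Γ v := by
  obtain ⟨φ, hφ, rfl⟩ := hvt v x
  exact hφ.mu_apply v

lemma ncard_isKernel_eq (hvt : VT Γ) (hv : IsKernel Γ v Kv) (hx : IsKernel Γ x Kx) :
    Kx.ncard = Kv.ncard := by
  obtain ⟨φ, hφ, rfl⟩ := hvt v x
  rw [hx.unique (hφ.isKernel_image hv), ncard_image_of_injective _ φ.injective]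

end VT

section Kernel

variable {Γ : V → Set V} {Kv Kx : Set V} {v x : V}

theorem IsKernel.mem_img_of_mem_kernel (hlf : LocFin Γ) (hKv : IsKernel Γ v Kv)
    (hKx : IsKernel Γ x Kx) (hmu : mu Γ x = mu Γ v) (hcard : Kx.ncard = Kv.ncard)
    (hv : v ∈ Kx) : x ∈ img Γ Kv := by
  by_contra hx
  have hinter : MoserSet Γ v (Kv ∩ Kx) := hKv.1.1.inter hv
  have hunion : MoserSet Γ x (Kv ∪ Kx) := hKx.1.1.union_left hKv.1.1.1 hx
  have hmol : Molecule Γ v (Kv ∩ Kx) := by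
    refine ⟨hinter, le_antisymm ?_ (mu_le_ncard_bd hinter)⟩
    have hsub := hlf.ncard_bd_inter_add_ncard_bd_union_le hKv.1.1.1 hKx.1.1.1
    have := mu_le_ncard_bd hunion
    rw [hKv.1.2, hKx.1.2] at hsub
    omega
  have hKeq : Kv = Kx :=
    eq_of_subset_of_ncard_le (fun y hy => (hKv.2 _ hmol hy).2) hcard.le hKx.1.1.1
  exact hx (mem_img_iff.2 ⟨x, hKeq ▸ hKx.1.1.2.1, hKx.1.1.mem_rel_self⟩)

def kernelGraph (Γ K : V → Set V) : V → Set V := fun v => Γ v ∩ K v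

variable {K : V → Set V}

lemma disjoint_rel_rev_kernelGraph_sdiff (hK : ∀ x, MoserSet Γ x (K x)) :
    Disjoint (Γ v) (rev (kernelGraph Γ K) v \ {v}) :=
  disjoint_left.2 fun _ hx ⟨⟨_, hvKx⟩, hxv⟩ => hxv ((hK _).eq_of_mem hx hvKx).symm

lemma rev_kernelGraph_sdiff_subset_bd (hvt : VT Γ) (hlf : LocFin Γ)
    (hK : ∀ x, IsKernel Γ x (K x)) (v : V) : rev (kernelGraph Γ K) v \ {v} ⊆ bd Γ (K v) :=
  fun x ⟨⟨hvx, hvKx⟩, hxv⟩ =>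
    ⟨(hK v).mem_img_of_mem_kernel hlf (hK x) (hvt.mu_eq x v)
        (hvt.ncard_isKernel_eq (hK v) (hK x)) hvKx,
      fun hxKv => hxv ((hK v).1.1.eq_of_mem hvx hxKv)⟩

end Kernel

theorem stmt9_general {V : Type*} (Γ : V → Set V) (hvt : VT Γ) (hlf : LocFin Γ)
    (K : V → Set V) (hK : ∀ v, IsKernel Γ v (K v)) (v : V) :
    (Γ v).ncard - ((fun v => Γ v ∩ K v) v).ncard
        + (rev (fun v => Γ v ∩ K v) v).ncard - 1 ≤ mu Γ v := by
  have hA : Γ v \ K v ⊆ bd Γ (K v) := sdiff_subset_bd (hK v).1.1.2.1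
  have hB := rev_kernelGraph_sdiff_subset_bd hvt hlf hK v
  have hbd : (bd Γ (K v)).Finite := hlf.bd_finite (hK v).1.1.1
  have hdisj : Disjoint (Γ v \ K v) (rev (kernelGraph Γ K) v \ {v}) :=
    (disjoint_rel_rev_kernelGraph_sdiff fun x => (hK x).1.1).mono_left sdiff_subset
  have hAB : (Γ v \ K v).ncard + (rev (kernelGraph Γ K) v \ {v}).ncard ≤ mu Γ v := by
    rw [← (hK v).1.2, ← ncard_union_eq hdisj (hbd.subset hA) (hbd.subset hB)]
    exact ncard_le_ncard (union_subset hA hB) hbd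
  have hΓ := ncard_inter_add_ncard_sdiff_eq_ncard (Γ v) (K v) (hlf v)
  have hrev := pred_ncard_le_ncard_sdiff_singleton (rev (kernelGraph Γ K) v) v
  change (Γ v).ncard - (Γ v ∩ K v).ncard + (rev (kernelGraph Γ K) v).ncard - 1 ≤ mu Γ v
  omega

/-- μ(v) ≥ |Γ(v)| − |Ω(v)| + |Ω⁻(v)| − 1. -/
theorem stmt9 {V : Type*} (Γ : V → Set V) (hvt : VT Γ) (hr : Refl Γ) (hlf : LocFin Γ)
    (K : V → Set V) (hK : ∀ v, IsKernel Γ v (K v)) (v : V) :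
    (Γ v).ncard - ((fun v => Γ v ∩ K v) v).ncard
        + (rev (fun v => Γ v ∩ K v) v).ncard - 1 ≤ mu Γ v :=
  stmt9_general Γ hvt hlf K hK v
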